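/- For the polynomial P(X,Y) = X + Y − 1, the function V(x,y) = −D(x) defined on C = {(x, 1−x) : x ∈ ℂ \ {0,1}}, where D is the Bloch–Wigner dilogarithm, satisfies dV = η|_C = log|1−x| d(arg x) − log|x| d(arg(1−x)). Hence P is exact. -/

import Mathlib

/-- `η = log|y| d(arg x) − log|x| d(arg y)` as a continuous `ℝ`-linear functional. -/
noncomputable def etaL (p : ℂ × ℂ) : (ℂ × ℂ) →L[ℝ] ℝ :=
  Real.log (‖p.2‖) •
      (Complex.imCLM.comp ((p.1⁻¹ • ContinuousLinearMap.fst ℂ ℂ ℂ).restrictScalars ℝ)) -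
    Real.log (‖p.1‖) •
      (Complex.imCLM.comp ((p.2⁻¹ • ContinuousLinearMap.snd ℂ ℂ ℂ).restrictScalars ℝ))

/-- The differential of the Bloch–Wigner dilogarithm:
`dD(z)(w) = log|z|·(d arg(1−z))(w) − log|1−z|·(d arg z)(w)
          = log|z|·Im(−w/(1−z)) − log|1−z|·Im(w/z)`. -/
noncomputable def dBW (z : ℂ) : ℂ →L[ℝ] ℝ :=
  Real.log (‖z‖) •
      (Complex.imCLM.comp (((-(1 - z)⁻¹) • ContinuousLinearMap.id ℂ ℂ).restrictScalars ℝ)) -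
    Real.log (‖1 - z‖) •
      (Complex.imCLM.comp ((z⁻¹ • ContinuousLinearMap.id ℂ ℂ).restrictScalars ℝ))

/-- A derivative within `s` at `x` is only tested on the displacements `y - x` with `y ∈ s`,
so it may be replaced by any linear map agreeing with it there. -/
theorem HasFDerivWithinAt.congr_fderiv_of_forall_mem_sub {𝕜 E F : Type*}
    [NontriviallyNormedField 𝕜] [NormedAddCommGroup E] [NormedSpace 𝕜 E]
    [NormedAddCommGroup F] [NormedSpace 𝕜 F] {f : E → F} {f' g' : E →L[𝕜] F} {s : Set E}
    {x : E} (h : HasFDerivWithinAt f f' s x) (h' : ∀ y ∈ s, f' (y - x) = g' (y - x)) :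
    HasFDerivWithinAt f g' s x := by
  rw [hasFDerivWithinAt_iff_isLittleO] at h ⊢
  exact h.congr' (eventually_nhdsWithin_of_forall fun y hy ↦ by simp only [h' y hy]) .rfl

theorem etaL_apply_tangent (x u : ℂ) : etaL (x, 1 - x) (u, -u) = -dBW x u := by
  simp [etaL, dBW]

theorem etaL_apply_sub_of_add_eq_one {z w : ℂ × ℂ} (hz : z.1 + z.2 = 1) (hw : w.1 + w.2 = 1) :
    etaL z (w - z) = -dBW z.1 (w.1 - z.1) := by
  obtain ⟨x, y⟩ := z
  obtain ⟨a, b⟩ := w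
  obtain rfl : y = 1 - x := by linear_combination hz
  obtain rfl : b = 1 - a := by linear_combination hw
  rw [← etaL_apply_tangent]
  congr 2
  ext <;> simp

/-- For `P = X + Y − 1`: the function `V(x,y) = −D(x)` (with `D` the Bloch–Wigner
dilogarithm, characterised by its differential `dBW`) satisfies
`dV = η|_C = log|1−x| d(arg x) − log|x| d(arg(1−x))` on the curve `y = 1 − x`,
where the tangent map of the parametrization `x ↦ (x, 1−x)` is `u ↦ (u, −u)`.
Hence `P` is exact. -/
theorem smyth_curve_exact
    (D : ℂ → ℝ) (hD : ∀ z : ℂ, z ≠ 0 → z ≠ 1 → HasFDerivAt D (dBW z) z) :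
    (∀ x : ℂ, x ≠ 0 → x ≠ 1 →
      HasFDerivAt (fun w : ℂ => -D w)
        ((etaL (x, 1 - x)).comp
          (((ContinuousLinearMap.id ℂ ℂ).prod
              (-(ContinuousLinearMap.id ℂ ℂ))).restrictScalars ℝ)) x) ∧
    (∃ V : ℂ × ℂ → ℝ,
      ∀ z ∈ {w : ℂ × ℂ | w.1 ≠ 0 ∧ w.2 ≠ 0 ∧ w.1 + w.2 = 1},
        HasFDerivWithinAt V (etaL z)
          {w : ℂ × ℂ | w.1 ≠ 0 ∧ w.2 ≠ 0 ∧ w.1 + w.2 = 1} z) := by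
  refine ⟨fun x hx0 hx1 ↦ (hD x hx0 hx1).neg.congr_fderiv ?_, fun w ↦ -D w.1, ?_⟩
  · ext u
    exact (etaL_apply_tangent x u).symm
  · rintro z ⟨hz0, hz2, hz⟩
    have hz1 : z.1 ≠ 1 := by
      rintro h
      exact hz2 (by linear_combination hz - h)
    refine ((hD z.1 hz0 hz1).neg.comp z hasFDerivAt_fst).hasFDerivWithinAt
      |>.congr_fderiv_of_forall_mem_sub fun w ⟨_, _, hw⟩ ↦ ?_
    simp [etaL_apply_sub_of_add_eq_one hz hw]
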